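/- arXiv:2202.00835 — 4 statements merged into one kernel-verified Lean document; each statement's English description precedes it below -/
import Mathlib

section
/- For any composition α with N(α) = max{α_i + i : α_i ≠ 0}, and any i, j with j > i, we have max(0, min(α_i, α_i + j − N(α) − 1)) ≤ c_{i,j}(α) ≤ min(α_i, j − i − 1). -/
/-!
Each step `j → j + 1` raises `c_{i,j}` by one unless `α_j ≥ α_i - c_{i,j}`, which gives the upper
bounds at once. For the lower bound: as long as `c_{i,j} < α_i`, a step without increase has
`α_j ≥ α_i - c_{i,j} > 0`, so `α_j + j ≤ N(α)` and hence `c_{i,j} ≥ α_i + j - N(α)`; either way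
`c_{i,j+1} ≥ α_i + (j + 1) - N(α) - 1`.
-/

/-- The matrix `c_{i,j}(α)` defined recursively in `j`. -/
def cmat (α : ℕ → ℕ) (i : ℕ) : ℕ → ℕ
  | 0 => 0
  | j + 1 =>
    if j + 1 ≤ i + 1 then 0
    else cmat α i j + if α j < α i - cmat α i j then 1 else 0

/-- `α` covers `α'` in position `(i,j)`: conditions (a1)–(a4). -/
def CoversAt (α α' : ℕ → ℕ) (i j : ℕ) : Prop :=
  1 ≤ i ∧ i < j ∧
  α' i + 1 ≤ α i ∧
  α' j + α' i + 1 = α j + α i ∧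
  (∀ k, k ≠ i → k ≠ j → α' k = α k) ∧
  cmat α i j = cmat α' i j ∧
  cmat α i j + α j = α' i

/-- `N(α) = max { α_i + i : α_i ≠ 0 }`. -/
noncomputable def Nval (α : ℕ → ℕ) : ℕ :=
  sSup {m | ∃ i, α i ≠ 0 ∧ α i + i = m}

section cmat

variable (α : ℕ → ℕ) {i j : ℕ}

lemma cmat_eq_zero_of_le (h : j ≤ i + 1) : cmat α i j = 0 := by
  cases j with
  | zero => rfl
  | succ j => simp [cmat, h]

lemma cmat_succ (h : i < j) :
    cmat α i (j + 1) = cmat α i j + if α j < α i - cmat α i j then 1 else 0 := by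
  simp [cmat, show ¬ j + 1 ≤ i + 1 by omega]

lemma cmat_le_left (i j : ℕ) : cmat α i j ≤ α i := by
  induction j with
  | zero => exact Nat.zero_le _
  | succ j ih =>
    rcases le_or_gt j i with hj | hj
    · simp [cmat_eq_zero_of_le α (by omega : j + 1 ≤ i + 1)]
    · rw [cmat_succ α hj]
      split_ifs <;> omega

lemma cmat_le_sub (i j : ℕ) : cmat α i j ≤ j - i - 1 := by
  induction j with
  | zero => exact Nat.zero_le _
  | succ j ih =>
    rcases le_or_gt j i with hj | hj
    · simp [cmat_eq_zero_of_le α (by omega : j + 1 ≤ i + 1)]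
    · rw [cmat_succ α hj]
      split_ifs <;> omega

lemma min_sub_le_cmat {N : ℕ} (hN : ∀ k, α k ≠ 0 → α k + k ≤ N) (i j : ℕ) :
    min (α i) (α i + j - (N + 1)) ≤ cmat α i j := by
  have hstart : ∀ j ≤ i + 1, min (α i) (α i + j - (N + 1)) = 0 := by
    intro j hj
    rcases eq_or_ne (α i) 0 with h0 | h0
    · simp [h0]
    · have := hN i h0
      omega
  induction j with
  | zero => exact (hstart 0 (Nat.zero_le _)).trans_le (Nat.zero_le _)
  | succ j ih =>
    rcases le_or_gt j i with hj | hj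
    · exact (hstart (j + 1) (by omega)).trans_le (Nat.zero_le _)
    · rw [cmat_succ α hj]
      split_ifs with hstep
      · omega
      · rcases lt_or_ge (cmat α i j) (α i) with hc | hc
        · have := hN j (by omega)
          omega
        · omega

end cmat

lemma le_Nval {α : ℕ → ℕ} (hbd : ∃ m, ∀ k, m < k → α k = 0) {k : ℕ} (hk : α k ≠ 0) :
    α k + k ≤ Nval α := by
  obtain ⟨m, hm⟩ := hbd
  have hfin : {n | ∃ k, α k ≠ 0 ∧ α k + k = n}.Finite := by
    refine ((Set.finite_Iic m).image fun k => α k + k).subset ?_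
    rintro _ ⟨k, hk, rfl⟩
    exact ⟨k, not_lt.mp fun h => hk (hm k h), rfl⟩
  exact le_csSup hfin.bddAbove ⟨k, hk, rfl⟩

theorem cmat_bounds_general (α : ℕ → ℕ)
    (hbd : ∃ m, ∀ k, m < k → α k = 0) (i j : ℕ) :
    min (α i) (α i + j - (Nval α + 1)) ≤ cmat α i j ∧
    cmat α i j ≤ min (α i) (j - i - 1) :=
  ⟨min_sub_le_cmat α (fun _ hk => le_Nval hbd hk) i j,
    le_min (cmat_le_left α i j) (cmat_le_sub α i j)⟩

/-- `max(0, min(α_i, α_i + j - N(α) - 1)) ≤ c_{i,j}(α) ≤ min(α_i, j - i - 1)`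
(in `ℕ`, truncated subtraction realizes the `max(0, ·)`). -/
theorem cmat_bounds (α : ℕ → ℕ) (hne : ∃ i, α i ≠ 0)
    (hbd : ∃ m, ∀ k, m < k → α k = 0) (i j : ℕ) (hij : i < j) :
    min (α i) (α i + j - (Nval α + 1)) ≤ cmat α i j ∧
    cmat α i j ≤ min (α i) (j - i - 1) :=
  cmat_bounds_general α hbd i j
end

section
/- Let w, w' ∈ S_n with codes α = code(w) and α' = code(w'). If there exists an index i such that α'_i = α_i − 1 and α'_k = α_k for every k ≠ i, then w covers w' in the strong Bruhat order. -/
/-- The Lehmer code of a permutation of `Fin n`. -/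
def lehmer {n : ℕ} (w : Equiv.Perm (Fin n)) (i : Fin n) : ℕ :=
  (Finset.univ.filter (fun k : Fin n => i < k ∧ w k < w i)).card

/-- Number of inversions (the length) of a permutation. -/
def nInv {n : ℕ} (w : Equiv.Perm (Fin n)) : ℕ :=
  (Finset.univ.filter (fun p : Fin n × Fin n => p.1 < p.2 ∧ w p.2 < w p.1)).card

/-- One step in the Bruhat order: right multiplication by a transposition
that increases the length. -/
def bruhatStep {n : ℕ} (u v : Equiv.Perm (Fin n)) : Prop :=
  (∃ i j : Fin n, i ≠ j ∧ v = u * Equiv.swap i j) ∧ nInv u < nInv v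

/-- The strong Bruhat order on `S_n`. -/
def bruhatLE {n : ℕ} (u v : Equiv.Perm (Fin n)) : Prop :=
  Relation.ReflTransGen bruhatStep u v

/-- `w` covers `w'` in the strong Bruhat order. -/
def bruhatCovers {n : ℕ} (w w' : Equiv.Perm (Fin n)) : Prop :=
  bruhatLE w' w ∧ nInv w = nInv w' + 1

/-!
Let `j > i` be the position carrying the largest value of `w` below `w i` to the right of `i`.
Since no value to the right of `i` lies strictly between `w j` and `w i`, the transposition
`w ↦ w * (i j)` lowers the code at `i` by one and leaves every other entry unchanged. A permutation
is determined by its code (entry `i` counts the values below `w i` not used before position `i`),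
so `w' = w * (i j)`, and as the length is the sum of the code, `ℓ(w) = ℓ(w') + 1`.
-/

open Equiv Finset

theorem Finset.card_Iio_sdiff_lt_card_Iio_sdiff {α : Type*} [Preorder α]
    [LocallyFiniteOrderBot α] [DecidableEq α] (s : Finset α) {x y : α} (hx : x ∉ s)
    (hxy : x < y) : #(Iio x \ s) < #(Iio y \ s) := by
  refine card_lt_card <| (ssubset_iff_of_subset ?_).2 ⟨x, ?_, ?_⟩
  · exact sdiff_subset_sdiff (Iio_subset_Iio hxy.le) subset_rfl
  · simp [hxy, hx]
  · simp

section Lehmer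

variable {n : ℕ}

theorem nInv_eq_sum_lehmer (w : Perm (Fin n)) : nInv w = ∑ i, lehmer w i := by
  simp only [nInv, lehmer, card_filter, Fintype.sum_prod_type]

theorem lehmer_eq_card_Iio_sdiff_image (w : Perm (Fin n)) (i : Fin n) :
    lehmer w i = #(Iio (w i) \ (Iio i).image w) := by
  rw [lehmer, ← card_image_of_injective _ w.injective]
  congr 1
  ext v
  obtain ⟨k, rfl⟩ := w.surjective v
  simp only [mem_image, mem_filter, mem_univ, true_and, mem_sdiff, mem_Iio, w.injective.eq_iff,
    exists_eq_right]
  constructor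
  · rintro ⟨hik, hk⟩
    exact ⟨hk, hik.asymm⟩
  · rintro ⟨hk, hki⟩
    refine ⟨lt_of_le_of_ne (not_lt.1 hki) ?_, hk⟩
    rintro rfl
    exact hk.false

theorem lehmer_injective : Function.Injective (lehmer : Perm (Fin n) → Fin n → ℕ) := by
  intro w w' h
  ext1 i
  induction i using WellFoundedLT.induction with
  | ind i ih =>
    have hpre : (Iio i).image w = (Iio i).image w' :=
      image_congr fun k hk => ih k (mem_Iio.1 hk)
    have hcode := congrFun h i
    rw [lehmer_eq_card_Iio_sdiff_image, lehmer_eq_card_Iio_sdiff_image, hpre] at hcode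
    have notMem : ∀ u : Perm (Fin n), u i ∉ (Iio i).image u := by simp
    rcases lt_trichotomy (w i) (w' i) with hlt | heq | hgt
    · have := card_Iio_sdiff_lt_card_Iio_sdiff _ (hpre ▸ notMem w) hlt
      omega
    · exact heq
    · have := card_Iio_sdiff_lt_card_Iio_sdiff _ (notMem w') hgt
      omega

variable (w : Perm (Fin n)) {i j m : Fin n}

theorem lehmer_mul_swap_of_lt (hi : m < i) (hj : m < j) : lehmer (w * swap i j) m = lehmer w m := by
  refine card_equiv (swap i j) fun k => ?_
  have hm : swap i j m = m := swap_apply_of_ne_of_ne hi.ne hj.ne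
  have hk : m < swap i j k ↔ m < k := by
    rcases eq_or_ne k i with rfl | hki
    · simp [hi, hj]
    rcases eq_or_ne k j with rfl | hkj
    · simp [hi, hj]
    rw [swap_apply_of_ne_of_ne hki hkj]
  simp [hm, hk]

theorem lehmer_mul_swap_of_gt (hgap : ∀ x, i < x → x ≠ j → (w x < w i ↔ w x < w j))
    (hm : i < m) : lehmer (w * swap i j) m = lehmer w m := by
  have key : ∀ x y, i < x → i < y → x ≠ y →
      (w (swap i j x) < w (swap i j y) ↔ w x < w y) := by
    intro x y hx hy hxy
    rcases eq_or_ne x j with rfl | hxj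
    · rw [swap_apply_right, swap_apply_of_ne_of_ne hy.ne' hxy.symm, ← not_le, ← not_le,
        le_iff_lt_or_eq, le_iff_lt_or_eq, hgap y hy hxy.symm, w.injective.eq_iff,
        w.injective.eq_iff]
      simp [hy.ne', hxy.symm]
    rcases eq_or_ne y j with rfl | hyj
    · rw [swap_apply_right, swap_apply_of_ne_of_ne hx.ne' hxj, hgap x hx hxj]
    · rw [swap_apply_of_ne_of_ne hx.ne' hxj, swap_apply_of_ne_of_ne hy.ne' hyj]
  unfold lehmer
  congr 1
  refine filter_congr fun k _ => ?_
  simp only [Perm.mul_apply]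
  exact and_congr_right fun hk => key k m (hm.trans hk) hm hk.ne'

theorem lehmer_mul_swap_self (hij : i < j) (hji : w j < w i)
    (hgap : ∀ x, i < x → x ≠ j → (w x < w i ↔ w x < w j)) :
    lehmer (w * swap i j) i + 1 = lehmer w i := by
  have hset : univ.filter (fun k => i < k ∧ (w * swap i j) k < (w * swap i j) i) =
      (univ.filter fun k => i < k ∧ w k < w i).erase j := by
    ext k
    simp only [mem_filter, mem_univ, true_and, mem_erase, Perm.mul_apply, swap_apply_left]
    rcases eq_or_ne k j with rfl | hkj
    · simp [hji.asymm]
    constructor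
    · rintro ⟨hik, hk⟩
      rw [swap_apply_of_ne_of_ne hik.ne' hkj] at hk
      exact ⟨hkj, hik, (hgap k hik hkj).2 hk⟩
    · rintro ⟨-, hik, hk⟩
      rw [swap_apply_of_ne_of_ne hik.ne' hkj]
      exact ⟨hik, (hgap k hik hkj).1 hk⟩
  have hj : j ∈ univ.filter fun k => i < k ∧ w k < w i := by simp [hij, hji]
  rw [lehmer, lehmer, hset, card_erase_of_mem hj, Nat.sub_add_cancel (card_pos.2 ⟨j, hj⟩)]

theorem exists_gap_right (h : 0 < lehmer w i) :
    ∃ j, i < j ∧ w j < w i ∧ ∀ x, i < x → x ≠ j → (w x < w i ↔ w x < w j) := by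
  obtain ⟨j, hj, hmax⟩ := exists_max_image _ w (card_pos.1 h)
  simp only [mem_filter, mem_univ, true_and] at hj hmax
  refine ⟨j, hj.1, hj.2, fun x hix hxj => ⟨fun hx => ?_, fun hx => hx.trans hj.2⟩⟩
  exact (hmax x ⟨hix, hx⟩).lt_of_ne (w.injective.ne hxj)

theorem nInv_eq_add_one_of_lehmer {w' : Perm (Fin n)} (h1 : lehmer w' i + 1 = lehmer w i)
    (h2 : ∀ k, k ≠ i → lehmer w' k = lehmer w k) : nInv w = nInv w' + 1 := by
  rw [nInv_eq_sum_lehmer, nInv_eq_sum_lehmer, ← add_sum_erase _ _ (mem_univ i),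
    ← add_sum_erase _ _ (mem_univ i), ← h1, sum_congr rfl fun k hk => h2 k (ne_of_mem_erase hk)]
  ring

end Lehmer

/-- if the codes of `w` and `w'` differ only in one entry,
by exactly one, then `w` covers `w'` in the strong Bruhat order. -/
theorem covers_of_code_diff_one (n : ℕ) (w w' : Equiv.Perm (Fin n)) (i : Fin n)
    (h1 : lehmer w' i + 1 = lehmer w i)
    (h2 : ∀ k, k ≠ i → lehmer w' k = lehmer w k) :
    bruhatCovers w w' := by
  obtain ⟨j, hij, hji, hgap⟩ := exists_gap_right w (i := i) (by omega)
  have hw' : w' = w * swap i j := lehmer_injective <| funext fun m => by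
    rcases lt_trichotomy m i with hm | rfl | hm
    · rw [lehmer_mul_swap_of_lt w hm (hm.trans hij), h2 m hm.ne]
    · have := lehmer_mul_swap_self w hij hji hgap
      omega
    · rw [lehmer_mul_swap_of_gt w hgap hm, h2 m hm.ne']
  have hlen := nInv_eq_add_one_of_lehmer w h1 h2
  refine ⟨.single ⟨⟨i, j, hij.ne, ?_⟩, by omega⟩, hlen⟩
  rw [hw', mul_swap_mul_self]
end

section
/- Let α be a composition, i an index with α_i ≠ 0, and z ∈ [1, α_i]. If α is (i,z)-removable, then the composition α' covered by α with α'_i = α_i − z is unique; explicitly, α'_{J̃(i,z)} = α_{J̃(i,z)} + z − 1 and α'_m = α_m for all m ∉ {i, J̃(i,z)}, where J̃(i,z) is the greatest j > i with c_{i,j}(α) = c_{i,j}(α̃) and α̃ is obtained from α by replacing α_i with α_i − z. -/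
/-- `α` is `(i,z)`-removable. -/
def IsRemovable (α : ℕ → ℕ) (i z : ℕ) : Prop :=
  ∃ α' j, CoversAt α α' i j ∧ α' i + z = α i

/-- `J̃(i,z)`: the greatest `j > i` such that `c_{i,j}(α) = c_{i,j}(α̃)`,
where `α̃` is `α` with `α_i` replaced by `α_i - z`. -/
noncomputable def Jt (α : ℕ → ℕ) (i z : ℕ) : ℕ :=
  sSup {j | i < j ∧ cmat α i j = cmat (Function.update α i (α i - z)) i j}

open Function

lemma cmat_of_le_succ (α : ℕ → ℕ) {i k : ℕ} (h : k ≤ i + 1) : cmat α i k = 0 := by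
  cases k with
  | zero => rfl
  | succ j => rw [cmat, if_pos h]

lemma cmat_succ_of_lt (α : ℕ → ℕ) {i j : ℕ} (h : i < j) :
    cmat α i (j + 1) = cmat α i j + if α j < α i - cmat α i j then 1 else 0 := by
  rw [cmat, if_neg (by omega)]

lemma cmat_le (α : ℕ → ℕ) (i k : ℕ) : cmat α i k ≤ α i := by
  induction k with
  | zero => exact Nat.zero_le _
  | succ j ih =>
    rw [cmat]
    split
    · exact Nat.zero_le _
    · split <;> omega

lemma cmat_congr {α β : ℕ → ℕ} {i k : ℕ} (hi : α i = β i)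
    (h : ∀ m, i < m → m < k → α m = β m) : cmat α i k = cmat β i k := by
  induction k with
  | zero => rfl
  | succ j ih =>
    by_cases hj : j + 1 ≤ i + 1
    · rw [cmat_of_le_succ _ hj, cmat_of_le_succ _ hj]
    · have hij : i < j := by omega
      rw [cmat_succ_of_lt _ hij, cmat_succ_of_lt _ hij, ih fun m h₁ h₂ => h m h₁ (by omega),
        hi, h j hij (by omega)]

section Lowering

variable {α β : ℕ → ℕ} {i : ℕ}

lemma cmat_le_cmat_add_sub (hle : β i ≤ α i) (heq : ∀ m, i < m → β m = α m) (k : ℕ) :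
    cmat α i k ≤ cmat β i k + (α i - β i) := by
  induction k with
  | zero => simp [cmat]
  | succ j ih =>
    by_cases hj : j + 1 ≤ i + 1
    · rw [cmat_of_le_succ _ hj, cmat_of_le_succ _ hj]; omega
    · have hij : i < j := by omega
      have := cmat_le β i j
      rw [cmat_succ_of_lt _ hij, cmat_succ_of_lt _ hij, heq j hij]
      split <;> split <;> omega

lemma cmat_succ_add_le_of_le (hle : β i ≤ α i) (heq : ∀ m, i < m → β m = α m) (j : ℕ) :
    cmat β i (j + 1) + cmat α i j ≤ cmat α i (j + 1) + cmat β i j := by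
  by_cases hj : j + 1 ≤ i + 1
  · rw [cmat_of_le_succ _ hj, cmat_of_le_succ _ hj, cmat_of_le_succ _ (by omega),
      cmat_of_le_succ _ (by omega)]
  · have hij : i < j := by omega
    have := cmat_le_cmat_add_sub hle heq j
    have := cmat_le β i j
    rw [cmat_succ_of_lt _ hij, cmat_succ_of_lt _ hij, heq j hij]
    split <;> split <;> omega

/-- The gap `cmat α i k - cmat β i k` is nondecreasing in `k`, stated without subtraction. -/
lemma cmat_gap_mono (hle : β i ≤ α i) (heq : ∀ m, i < m → β m = α m) {k k' : ℕ}
    (hk : k ≤ k') : cmat β i k' + cmat α i k ≤ cmat α i k' + cmat β i k := by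
  induction k', hk using Nat.le_induction with
  | base => omega
  | succ j _ ih => have := cmat_succ_add_le_of_le hle heq j; omega

end Lowering

lemma CoversAt.isGreatest {α α' : ℕ → ℕ} {i j : ℕ} (hc : CoversAt α α' i j) :
    IsGreatest {k | i < k ∧ cmat α i k = cmat (update α i (α' i)) i k} j := by
  obtain ⟨-, hij, hlt, -, hrest, hcm, hci⟩ := hc
  set β := update α i (α' i)
  have hβi : β i = α' i := update_self _ _ _
  have hβ : ∀ m, i < m → β m = α m := fun m hm => update_of_ne (by omega) _ _
  have hj : cmat α i j = cmat β i j := hcm.trans <| cmat_congr hβi.symm fun m him hmj =>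
    (hrest m (by omega) (by omega)).trans (hβ m him).symm
  have hα_step : cmat α i (j + 1) = cmat α i j + 1 := by
    rw [cmat_succ_of_lt _ hij, if_pos (by omega)]
  have hβ_step : cmat β i (j + 1) = cmat β i j := by
    rw [cmat_succ_of_lt _ hij, hβi, hβ j hij, ← hj, if_neg (by omega), Nat.add_zero]
  refine ⟨⟨hij, hj⟩, fun k ⟨_, hk⟩ => ?_⟩
  by_contra! hjk
  have := cmat_gap_mono (by omega : β i ≤ α i) hβ (by omega : j + 1 ≤ k)
  omega

lemma CoversAt.eq_Jt {α α' : ℕ → ℕ} {i j z : ℕ} (hc : CoversAt α α' i j)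
    (hz : α' i + z = α i) : j = Jt α i z := by
  have hα' : α' i = α i - z := by omega
  rw [Jt, ← hα']
  exact hc.isGreatest.csSup_eq.symm

lemma CoversAt.eq_update {α α' : ℕ → ℕ} {i j z : ℕ} (hc : CoversAt α α' i j)
    (hz : α' i + z = α i) : α' = update (update α i (α i - z)) j (α j + z - 1) := by
  obtain ⟨-, -, hlt, hsum, hrest, -, -⟩ := hc
  funext m
  rcases eq_or_ne m j with rfl | hmj
  · rw [update_self]; omega
  rw [update_of_ne hmj]
  rcases eq_or_ne m i with rfl | hmi
  · rw [update_self]; omega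
  rw [update_of_ne hmi, hrest m hmi hmj]

theorem removing_unique_general (α : ℕ → ℕ) (i z : ℕ) (h : IsRemovable α i z) :
    (∃! α' : ℕ → ℕ, (∃ j, CoversAt α α' i j) ∧ α' i + z = α i) ∧
    (∀ α' : ℕ → ℕ, ((∃ j, CoversAt α α' i j) ∧ α' i + z = α i) →
      α' (Jt α i z) = α (Jt α i z) + z - 1 ∧
      ∀ m, m ≠ i → m ≠ Jt α i z → α' m = α m) := by
  have explicit : ∀ α' : ℕ → ℕ, ((∃ j, CoversAt α α' i j) ∧ α' i + z = α i) →
      α' = update (update α i (α i - z)) (Jt α i z) (α (Jt α i z) + z - 1) := by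
    rintro α' ⟨⟨j, hc⟩, hz⟩
    exact hc.eq_Jt hz ▸ hc.eq_update hz
  obtain ⟨α₀, j₀, hc₀, hz₀⟩ := h
  refine ⟨⟨α₀, ⟨⟨j₀, hc₀⟩, hz₀⟩, fun β hβ =>
    (explicit β hβ).trans (explicit α₀ ⟨⟨j₀, hc₀⟩, hz₀⟩).symm⟩, fun α' hα' => ?_⟩
  obtain rfl := explicit α' hα'
  refine ⟨update_self _ _ _, fun m hmi hmJ => ?_⟩
  rw [update_of_ne hmJ, update_of_ne hmi]

/-- if `α` is `(i,z)`-removable, the composition `α'` covered by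
`α` with `α'_i = α_i - z` is unique, and it is given explicitly by
`α'_{J̃(i,z)} = α_{J̃(i,z)} + z - 1` and `α'_m = α_m` for `m ∉ {i, J̃(i,z)}`. -/
theorem removing_unique (α : ℕ → ℕ) (hbd : ∃ m, ∀ k, m < k → α k = 0)
    (i z : ℕ) (hi : 1 ≤ i) (hz1 : 1 ≤ z) (hz2 : z ≤ α i)
    (h : IsRemovable α i z) :
    (∃! α' : ℕ → ℕ, (∃ j, CoversAt α α' i j) ∧ α' i + z = α i) ∧
    (∀ α' : ℕ → ℕ, ((∃ j, CoversAt α α' i j) ∧ α' i + z = α i) →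
      α' (Jt α i z) = α (Jt α i z) + z - 1 ∧
      ∀ m, m ≠ i → m ≠ Jt α i z → α' m = α m) :=
  removing_unique_general α i z h
end

section
/- Let w ∈ S_n with α = code(w). Then for all 1 ≤ i < j ≤ n, c_{i,j}(α) = #{k : i < k < j and w(k) < w(i)}. In particular, c_{i,n}(α) = α_i − [w(n) < w(i)] and c_{i,n+1}(α) = α_i. -/
/-- The Lehmer code of `w ∈ S_n`, as a function on 1-based positions in `ℕ`. -/
def codeP (n : ℕ) (w : Equiv.Perm (Fin n)) (i : ℕ) : ℕ :=
  if h : 1 ≤ i ∧ i ≤ n then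
    (Finset.univ.filter (fun k : Fin n => i ≤ k.val ∧ w k < w ⟨i - 1, by omega⟩)).card
  else 0

/-!
For `i < j` split `α_i = code(w)_i` into the inversions `(i, k)` with `k < j` and the number `t`
of positions `k ≥ j` with `w k < w i`. Inductively `c_{i,j}` is the first part, so the test
`α_j < α_i - c_{i,j}` compares `α_j` with `t`. If `w j < w i`, every `k > j` counted by `α_j` is
counted by `t`, and so is `j` itself, so `α_j < t`; if `w j > w i`, every `k` counted by `t` is
counted by `α_j`. Hence `c_{i,j+1} - c_{i,j} = [w j < w i]`, the recursion the inversion counts obey.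
-/

open Finset Function

section LehmerCode

variable {n : ℕ} {α : Type*} [LinearOrder α] (w : Fin n → α)

def lehmerCode (a : Fin n) : ℕ := #{k | a < k ∧ w k < w a}

-- Positions are 0-based here, whereas `codeP` and `cmat` index them from 1.
def inversionsBefore (a : Fin n) (m : ℕ) : ℕ := #{k | a < k ∧ (k : ℕ) < m ∧ w k < w a}

theorem inversionsBefore_eq_zero {a : Fin n} {m : ℕ} (h : m ≤ a + 1) :
    inversionsBefore w a m = 0 := by
  refine card_eq_zero.2 (filter_eq_empty_iff.2 fun k _ ⟨hak, hkm, _⟩ => ?_)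
  rw [Fin.lt_def] at hak
  omega

theorem inversionsBefore_eq_lehmerCode {a : Fin n} {m : ℕ} (h : n ≤ m) :
    inversionsBefore w a m = lehmerCode w a := by
  unfold inversionsBefore lehmerCode
  congr 1
  refine filter_congr fun k _ => ?_
  have := k.isLt
  grind

theorem inversionsBefore_succ {a b : Fin n} (hab : a < b) :
    inversionsBefore w a (b + 1) = inversionsBefore w a b + if w b < w a then 1 else 0 := by
  unfold inversionsBefore
  split_ifs with hb
  · rw [← card_insert_of_notMem (s := {k | a < k ∧ (k : ℕ) < b ∧ w k < w a}) (a := b) (by simp)]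
    congr 1
    ext k
    simp only [mem_filter, mem_univ, true_and, mem_insert, Fin.ext_iff, Fin.lt_def]
    grind
  · rw [add_zero]
    congr 1
    ext k
    simp only [mem_filter, mem_univ, true_and, Fin.lt_def]
    grind

theorem inversionsBefore_add_card_filter {a : Fin n} {m : ℕ} (h : (a : ℕ) < m) :
    inversionsBefore w a m + #{k : Fin n | m ≤ (k : ℕ) ∧ w k < w a} = lehmerCode w a := by
  unfold inversionsBefore lehmerCode
  rw [← card_union_of_disjoint]
  · congr 1
    ext k
    simp only [mem_union, mem_filter, mem_univ, true_and, Fin.lt_def]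
    grind
  · exact disjoint_filter.2 fun k _ hkm hmk => by omega

theorem lehmerCode_lt_card_filter_iff (hw : Injective w) {a b : Fin n} (hab : a < b) :
    lehmerCode w b < #{k : Fin n | (b : ℕ) ≤ k ∧ w k < w a} ↔ w b < w a := by
  unfold lehmerCode
  constructor
  · contrapose!
    intro hle
    have hlt : w a < w b := hle.lt_of_ne (hw.ne hab.ne)
    refine card_le_card fun k hk => ?_
    simp only [mem_filter, mem_univ, true_and] at hk ⊢
    refine ⟨lt_of_le_of_ne (Fin.le_def.2 hk.1) ?_, hk.2.trans hlt⟩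
    rintro rfl
    exact hk.2.not_gt hlt
  · intro hba
    refine card_lt_card ⟨fun k hk => ?_, fun hsub => ?_⟩
    · simp only [mem_filter, mem_univ, true_and] at hk ⊢
      exact ⟨Fin.le_def.1 hk.1.le, hk.2.trans hba⟩
    · have hb := hsub (show b ∈ _ by simpa using hba)
      simp at hb

end LehmerCode

theorem codeP_succ (n : ℕ) (w : Equiv.Perm (Fin n)) (a : Fin n) :
    codeP n w (a + 1) = lehmerCode w a := by
  rw [codeP, dif_pos ⟨le_add_self, a.isLt⟩, lehmerCode]
  congr 1

theorem cmat_codeP_succ (n : ℕ) (w : Equiv.Perm (Fin n)) (a : Fin n) {m : ℕ} (ham : (a : ℕ) < m)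
    (hmn : m ≤ n) : cmat (codeP n w) (a + 1) (m + 1) = inversionsBefore w a m := by
  induction m, ham using Nat.le_induction with
  | base => rw [cmat, if_pos le_rfl, inversionsBefore_eq_zero w le_rfl]
  | succ m ham ih =>
    set b : Fin n := ⟨m, by omega⟩
    have hab : a < b := Fin.lt_def.2 ham
    rw [cmat, if_neg (by omega), ih (by omega), show m + 1 = b + 1 from rfl, codeP_succ, codeP_succ,
      ← inversionsBefore_add_card_filter w ham, Nat.add_sub_cancel_left,
      inversionsBefore_succ w hab]
    simp only [lehmerCode_lt_card_filter_iff w w.injective hab, b]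

theorem cmat_codeP (n : ℕ) (w : Equiv.Perm (Fin n)) {i j : ℕ} (hi : 1 ≤ i) (hij : i < j)
    (hj : j ≤ n + 1) : cmat (codeP n w) i j = inversionsBefore w ⟨i - 1, by omega⟩ (j - 1) := by
  obtain ⟨i, rfl⟩ := Nat.exists_eq_add_of_le' hi
  obtain ⟨j, rfl⟩ := Nat.exists_eq_add_of_le' (hi.trans_lt hij)
  exact cmat_codeP_succ n w ⟨i, by omega⟩ (by simp only; omega) (by omega)

theorem codeP_eq_inversionsBefore (n : ℕ) (w : Equiv.Perm (Fin n)) {i : ℕ} (hi : 1 ≤ i)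
    (hin : i ≤ n) : codeP n w i = inversionsBefore w ⟨i - 1, by omega⟩ n := by
  obtain ⟨i, rfl⟩ := Nat.exists_eq_add_of_le' hi
  exact (codeP_succ n w ⟨i, by omega⟩).trans (inversionsBefore_eq_lehmerCode w le_rfl).symm

/-- for `α = code(w)` and `1 ≤ i < j ≤ n`,
`c_{i,j}(α) = #{k : i < k < j and w(k) < w(i)}`; in particular
`c_{i,n}(α) = α_i - [w(n) < w(i)]` and `c_{i,n+1}(α) = α_i`. -/
theorem cmat_code_eq (n : ℕ) (w : Equiv.Perm (Fin n)) :
    (∀ (i j : ℕ) (hi : 1 ≤ i) (hij : i < j) (hj : j ≤ n),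
      cmat (codeP n w) i j =
        (Finset.univ.filter (fun k : Fin n =>
          i ≤ k.val ∧ k.val + 1 < j ∧ w k < w ⟨i - 1, by omega⟩)).card) ∧
    (∀ (i : ℕ) (hi : 1 ≤ i) (hin : i < n),
      cmat (codeP n w) i n +
        (if w ⟨n - 1, by omega⟩ < w ⟨i - 1, by omega⟩ then 1 else 0) =
        codeP n w i) ∧
    (∀ (i : ℕ) (hi : 1 ≤ i) (hin : i ≤ n),
      cmat (codeP n w) i (n + 1) = codeP n w i) := by
  refine ⟨fun i j hi hij hj => ?_, fun i hi hin => ?_, fun i hi hin => ?_⟩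
  · rw [cmat_codeP n w hi hij (by omega), inversionsBefore]
    congr 1
    refine filter_congr fun k _ => ?_
    rw [Fin.lt_def]
    grind
  · have hlast : (⟨i - 1, by omega⟩ : Fin n) < ⟨n - 1, by omega⟩ := Fin.lt_def.2 (by simp only; omega)
    rw [cmat_codeP n w hi hin n.le_succ, codeP_eq_inversionsBefore n w hi hin.le,
      ← inversionsBefore_succ w hlast, Nat.sub_add_cancel (by omega)]
  · rw [cmat_codeP n w hi (by omega) le_rfl, codeP_eq_inversionsBefore n w hi hin, Nat.add_sub_cancel]
end
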